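/- Let {e₁,...,eₙ} be a basis of F_q^n, let A be the set of vectors all of whose coordinates (in this basis) are nonzero, and B the set of vectors all of whose coordinates lie in {0,1}. Then K := A ∪ B is a rank-1 Kakeya set in F_q^n, and |K| = (q-1)^n + 2^n - 1. -/

import Mathlib

/-!
Coordinatewise, take the base point `v` with `vᵢ = 1` where `dᵢ = 0` and `vᵢ = 0` elsewhere.
At `t = 0` the point `v` is a 0/1 vector, and for `t ≠ 0` every coordinate of `v + t • d` is
either `1` or `t * dᵢ ≠ 0`. The count is inclusion–exclusion: the two cubes meet only in the
all-ones vector.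
-/

def IsKakeya (F : Type*) {V : Type*} [Semiring F] [AddCommMonoid V] [Module F V]
    (K : Set V) : Prop :=
  ∀ d : V, d ≠ 0 → ∃ v : V, ∀ t : F, v + t • d ∈ K

theorem IsKakeya.preimage_linearEquiv {F V W : Type*} [Semiring F] [AddCommMonoid V]
    [AddCommMonoid W] [Module F V] [Module F W] {K : Set W} (hK : IsKakeya F K)
    (e : V ≃ₗ[F] W) : IsKakeya F (e ⁻¹' K) := by
  intro d hd
  obtain ⟨w, hw⟩ := hK (e d) (e.map_ne_zero_iff.mpr hd)
  exact ⟨e.symm w, fun t => by simpa using hw t⟩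

theorem Set.ncard_univ_pi_const {ι α : Type*} [Fintype ι] (s : Set α) :
    (Set.univ.pi fun _ : ι => s).ncard = s.ncard ^ Fintype.card ι := by
  simp only [Set.ncard_def, Set.encard_pi_eq_prod_encard, Finset.prod_const, Finset.card_univ]
  exact map_pow ENat.toNatHom _ _

section Cubes

variable (ι F : Type*)

def nonzeroCube [Zero F] : Set (ι → F) := {v | ∀ i, v i ≠ 0}

def binaryCube [Zero F] [One F] : Set (ι → F) := {v | ∀ i, v i = 0 ∨ v i = 1}

theorem isKakeya_nonzeroCube_union_binaryCube [Semiring F] [NoZeroDivisors F] :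
    IsKakeya F (nonzeroCube ι F ∪ binaryCube ι F) := by
  classical
  intro d _
  refine ⟨fun i => if d i = 0 then 1 else 0, fun t => ?_⟩
  by_cases ht : t = 0
  · right
    intro i
    by_cases h : d i = 0 <;> simp [ht, h]
  · left
    have : Nontrivial F := ⟨⟨t, 0, ht⟩⟩
    intro i
    by_cases h : d i = 0 <;> simp [ht, h]

theorem nonzeroCube_inter_binaryCube [Zero F] [One F] [NeZero (1 : F)] :
    nonzeroCube ι F ∩ binaryCube ι F = {1} := by
  ext v
  simp only [nonzeroCube, binaryCube, Set.mem_inter_iff, Set.mem_ofPred_eq,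
    Set.mem_singleton_iff, funext_iff, Pi.one_apply]
  exact ⟨fun ⟨h0, h01⟩ i => (h01 i).resolve_left (h0 i),
    fun h1 => ⟨fun i => h1 i ▸ one_ne_zero, fun i => .inr (h1 i)⟩⟩

variable [Fintype ι]

theorem ncard_nonzeroCube [Zero F] [Finite F] :
    (nonzeroCube ι F).ncard = (Nat.card F - 1) ^ Fintype.card ι := by
  have : nonzeroCube ι F = Set.univ.pi fun _ => {0}ᶜ := by
    ext v; simp [nonzeroCube]
  rw [this, Set.ncard_univ_pi_const, Set.ncard_compl, Set.ncard_singleton]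

theorem ncard_binaryCube [Zero F] [One F] [NeZero (1 : F)] :
    (binaryCube ι F).ncard = 2 ^ Fintype.card ι := by
  have : binaryCube ι F = Set.univ.pi fun _ => {0, 1} := by
    ext v; simp [binaryCube]
  rw [this, Set.ncard_univ_pi_const, Set.ncard_pair zero_ne_one]

theorem ncard_nonzeroCube_union_binaryCube [Zero F] [One F] [NeZero (1 : F)] [Finite F] :
    (nonzeroCube ι F ∪ binaryCube ι F).ncard =
      (Nat.card F - 1) ^ Fintype.card ι + 2 ^ Fintype.card ι - 1 := by
  have h := Set.ncard_union_add_ncard_inter (nonzeroCube ι F) (binaryCube ι F)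
  rw [ncard_nonzeroCube, ncard_binaryCube, nonzeroCube_inter_binaryCube,
    Set.ncard_singleton] at h
  omega

end Cubes

theorem missing_digit_kakeya_general {F : Type} [Field F] [Fintype F] (n : ℕ)
    (b : Module.Basis (Fin n) F (Fin n → F)) (A B : Set (Fin n → F))
    (hA : A = {v | ∀ i, b.repr v i ≠ 0})
    (hB : B = {v | ∀ i, b.repr v i = 0 ∨ b.repr v i = 1}) :
    (∀ d : Fin n → F, d ≠ 0 → ∃ v : Fin n → F, ∀ t : F, v + t • d ∈ A ∪ B) ∧
      (A ∪ B).ncard = (Fintype.card F - 1) ^ n + 2 ^ n - 1 := by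
  have hK : A ∪ B = b.equivFun ⁻¹' (nonzeroCube (Fin n) F ∪ binaryCube (Fin n) F) := by
    subst hA hB; rfl
  rw [hK]
  refine ⟨(isKakeya_nonzeroCube_union_binaryCube (Fin n) F).preimage_linearEquiv b.equivFun, ?_⟩
  rw [Set.ncard_preimage_of_injective_subset_range b.equivFun.injective (by simp),
    ncard_nonzeroCube_union_binaryCube,
    Nat.card_eq_fintype_card, Fintype.card_fin]

theorem missing_digit_kakeya {F : Type} [Field F] [Fintype F] (n : ℕ) (hn : 1 ≤ n)
    (b : Module.Basis (Fin n) F (Fin n → F)) (A B : Set (Fin n → F))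
    (hA : A = {v | ∀ i, b.repr v i ≠ 0})
    (hB : B = {v | ∀ i, b.repr v i = 0 ∨ b.repr v i = 1}) :
    (∀ d : Fin n → F, d ≠ 0 → ∃ v : Fin n → F, ∀ t : F, v + t • d ∈ A ∪ B) ∧
      (A ∪ B).ncard = (Fintype.card F - 1) ^ n + 2 ^ n - 1 :=
  missing_digit_kakeya_general n b A B hA hB
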